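/- Let e : ℝ → ℝ be C¹ with e(0) = 0, ζ > 0, and e_c(t) = 2ζ e(t) + ζ² ∫₀ᵗ e(θ) dθ + ė(t). If e_c(t) → 0 as t → ∞, then e(t) → 0 as t → ∞. -/

import Mathlib

open Filter

private lemma exp_mul_deriv (ζ : ℝ) (t : ℝ) :
    HasDerivAt (fun s => Real.exp (ζ * s)) (Real.exp (ζ * t) * ζ) t := by
  simpa using ((hasDerivAt_id t).const_mul ζ).exp

private lemma decay {ζ : ℝ} (hζ : 0 < ζ) {f g : ℝ → ℝ} (hg : Continuous g)
    (hf : ∀ t, HasDerivAt f (g t - ζ * f t) t)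
    (hglim : Tendsto g atTop (nhds 0)) : Tendsto f atTop (nhds 0) := by
  have hGc : Continuous (fun s => Real.exp (ζ * s) * g s) :=
    (Real.continuous_exp.comp (continuous_const.mul continuous_id)).mul hg
  have hGint : ∀ a b : ℝ, IntervalIntegrable (fun s => Real.exp (ζ * s) * g s)
      MeasureTheory.volume a b := fun a b => hGc.intervalIntegrable a b
  have hF : ∀ t, HasDerivAt (fun t => Real.exp (ζ * t) * f t) (Real.exp (ζ * t) * g t) t := by
    intro t
    have h1 := (exp_mul_deriv ζ t).mul (hf t)
    refine h1.congr_deriv ?_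
    ring
  have key : ∀ t, f t = Real.exp (-(ζ * t)) *
      (f 0 + ∫ s in (0:ℝ)..t, Real.exp (ζ * s) * g s) := by
    intro t
    have h2 := intervalIntegral.integral_eq_sub_of_hasDerivAt (f := fun t => Real.exp (ζ * t) * f t)
      (fun x _ => hF x) (hGint 0 t)
    simp only [mul_zero, Real.exp_zero, one_mul] at h2
    have h3 : Real.exp (ζ * t) * f t = f 0 + ∫ s in (0:ℝ)..t, Real.exp (ζ * s) * g s := by
      rw [h2]; ring
    rw [← h3, ← mul_assoc, ← Real.exp_add]
    simp
  have hexp : Tendsto (fun t : ℝ => Real.exp (-(ζ * t))) atTop (nhds 0) := by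
    have h1 : Tendsto (fun t : ℝ => ζ * t) atTop atTop :=
      Tendsto.const_mul_atTop hζ tendsto_id
    exact Real.tendsto_exp_neg_atTop_nhds_zero.comp h1
  rw [Metric.tendsto_atTop] at hglim ⊢
  intro ε hε
  obtain ⟨T, hT⟩ := hglim (ζ * ε / 2) (by positivity)
  set C := |f 0 + ∫ s in (0:ℝ)..T, Real.exp (ζ * s) * g s| with hC
  have hdec : Tendsto (fun t => Real.exp (-(ζ * t)) * C) atTop (nhds 0) := by
    simpa using hexp.mul_const C
  obtain ⟨T', hT'⟩ := Metric.tendsto_atTop.mp hdec (ε / 2) (by positivity)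
  refine ⟨max T T', fun t ht => ?_⟩
  have htT : T ≤ t := le_trans (le_max_left _ _) ht
  have htT' : T' ≤ t := le_trans (le_max_right _ _) ht
  have hsplit : (∫ s in (0:ℝ)..t, Real.exp (ζ * s) * g s) =
      (∫ s in (0:ℝ)..T, Real.exp (ζ * s) * g s) + ∫ s in T..t, Real.exp (ζ * s) * g s :=
    (intervalIntegral.integral_add_adjacent_intervals (hGint 0 T) (hGint T t)).symm
  -- bound tail integral
  have hexpint : (∫ s in T..t, Real.exp (ζ * s)) =
      (Real.exp (ζ * t) - Real.exp (ζ * T)) / ζ := by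
    have hD : ∀ s : ℝ, HasDerivAt (fun s => Real.exp (ζ * s) / ζ) (Real.exp (ζ * s)) s := by
      intro s
      have := (exp_mul_deriv ζ s).div_const ζ
      refine this.congr_deriv ?_
      field_simp
    rw [intervalIntegral.integral_eq_sub_of_hasDerivAt (fun x _ => hD x)
      ((Real.continuous_exp.comp (continuous_const.mul continuous_id)).intervalIntegrable T t)]
    ring
  have hItail : |∫ s in T..t, Real.exp (ζ * s) * g s| ≤ ε / 2 * Real.exp (ζ * t) := by
    have h1 : |∫ s in T..t, Real.exp (ζ * s) * g s| ≤
        ∫ s in T..t, |Real.exp (ζ * s) * g s| :=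
      intervalIntegral.abs_integral_le_integral_abs htT
    have h2 : (∫ s in T..t, |Real.exp (ζ * s) * g s|) ≤
        ∫ s in T..t, Real.exp (ζ * s) * (ζ * ε / 2) := by
      apply intervalIntegral.integral_mono_on htT ((hGint T t).abs)
        ((((Real.continuous_exp.comp (continuous_const.mul continuous_id)).mul
          continuous_const)).intervalIntegrable T t)
      intro s hs
      rw [abs_mul, abs_of_pos (Real.exp_pos _)]
      have hgs : |g s| ≤ ζ * ε / 2 := by
        have := hT s hs.1
        rw [Real.dist_eq, sub_zero] at this
        linarith
      exact mul_le_mul_of_nonneg_left hgs (Real.exp_pos _).le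
    have h3 : (∫ s in T..t, Real.exp (ζ * s) * (ζ * ε / 2)) =
        (ζ * ε / 2) * ((Real.exp (ζ * t) - Real.exp (ζ * T)) / ζ) := by
      rw [intervalIntegral.integral_mul_const, hexpint]; ring
    have h4 : (ζ * ε / 2) * ((Real.exp (ζ * t) - Real.exp (ζ * T)) / ζ) ≤
        ε / 2 * Real.exp (ζ * t) := by
      have hE : 0 < Real.exp (ζ * T) := Real.exp_pos _
      have heq : ζ * ε / 2 * ((Real.exp (ζ * t) - Real.exp (ζ * T)) / ζ) =
          ε / 2 * (Real.exp (ζ * t) - Real.exp (ζ * T)) := by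
        field_simp
      rw [heq]
      nlinarith
    linarith
  have hfin : |f t| ≤ Real.exp (-(ζ * t)) * C + ε / 2 := by
    rw [key t, hsplit, abs_mul, abs_of_pos (Real.exp_pos _)]
    have : |f 0 + ((∫ s in (0:ℝ)..T, Real.exp (ζ * s) * g s) +
        ∫ s in T..t, Real.exp (ζ * s) * g s)| ≤ C + |∫ s in T..t, Real.exp (ζ * s) * g s| := by
      rw [← add_assoc]
      exact abs_add_le _ _
    have hE : 0 < Real.exp (-(ζ * t)) := Real.exp_pos _
    have h5 : Real.exp (-(ζ * t)) * |f 0 + ((∫ s in (0:ℝ)..T, Real.exp (ζ * s) * g s) +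
        ∫ s in T..t, Real.exp (ζ * s) * g s)| ≤
        Real.exp (-(ζ * t)) * (C + ε / 2 * Real.exp (ζ * t)) := by
      apply mul_le_mul_of_nonneg_left _ hE.le
      linarith
    have h6 : Real.exp (-(ζ * t)) * (C + ε / 2 * Real.exp (ζ * t)) =
        Real.exp (-(ζ * t)) * C + ε / 2 * (Real.exp (-(ζ * t)) * Real.exp (ζ * t)) := by ring
    rw [← Real.exp_add, neg_add_cancel, Real.exp_zero, mul_one] at h6
    linarith
  have hC0 : Real.exp (-(ζ * t)) * C < ε / 2 := by
    have := hT' t htT'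
    rw [Real.dist_eq, sub_zero] at this
    have hCnn : 0 ≤ C := abs_nonneg _
    have hE : 0 < Real.exp (-(ζ * t)) := Real.exp_pos _
    calc Real.exp (-(ζ * t)) * C ≤ |Real.exp (-(ζ * t)) * C| := le_abs_self _
      _ < ε / 2 := this
  rw [Real.dist_eq, sub_zero]
  calc |f t| ≤ Real.exp (-(ζ * t)) * C + ε / 2 := hfin
    _ < ε / 2 + ε / 2 := by linarith
    _ = ε := by ring

theorem commutative_error_tendsto_zero_implies_error_tendsto_zero
    (e e' e_c : ℝ → ℝ) (ζ : ℝ) (hζ : 0 < ζ)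
    (he : ∀ t, HasDerivAt e (e' t) t)
    (hcont : Continuous e')
    (h0 : e 0 = 0)
    (hec : ∀ t, e_c t = 2 * ζ * e t + ζ ^ 2 * (∫ θ in (0:ℝ)..t, e θ) + e' t)
    (hlim : Tendsto e_c atTop (nhds 0)) :
    Tendsto e atTop (nhds 0) := by
  have hed : Differentiable ℝ e := fun t => (he t).differentiableAt
  have hecont : Continuous e := hed.continuous
  set w : ℝ → ℝ := fun t => ∫ θ in (0:ℝ)..t, e θ with hw_def
  have hw : ∀ t, HasDerivAt w (e t) t := by
    intro t
    exact intervalIntegral.integral_hasDerivAt_right (hecont.intervalIntegrable 0 t)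
      (hecont.stronglyMeasurableAtFilter _ _) hecont.continuousAt
  have hwd' : Differentiable ℝ w := fun t => (hw t).differentiableAt
  have hwc : Continuous w := hwd'.continuous
  set x : ℝ → ℝ := fun t => ζ * w t + e t with hx_def
  have hxc : Continuous x := (continuous_const.mul hwc).add hecont
  have hxd : ∀ t, HasDerivAt x (e_c t - ζ * x t) t := by
    intro t
    have := ((hw t).const_mul ζ).add (he t)
    refine this.congr_deriv ?_
    rw [hec t]
    simp only [hx_def]
    ring
  have hecc : Continuous e_c := by
    have : e_c = fun t => 2 * ζ * e t + ζ ^ 2 * w t + e' t := funext hec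
    rw [this]
    exact ((continuous_const.mul hecont).add (continuous_const.mul hwc)).add hcont
  have hxlim : Tendsto x atTop (nhds 0) := decay hζ hecc hxd hlim
  have hwd : ∀ t, HasDerivAt w (x t - ζ * w t) t := by
    intro t
    convert hw t using 1
    simp only [hx_def]
    ring
  have hwlim : Tendsto w atTop (nhds 0) := decay hζ hxc hwd hxlim
  have : Tendsto (fun t => x t - ζ * w t) atTop (nhds 0) := by
    have := hxlim.sub (hwlim.const_mul ζ)
    simpa using this
  convert this using 2 with t
  simp only [hx_def]
  ring
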